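/- arXiv:math/9908044 — 2 statements merged into one kernel-verified Lean document; each statement's English description precedes it below -/
import Mathlib

section
/- Define F(x, α) = ((√3 + 5α)/(2α))·exp(α·x) for α > 0. For every fixed x > 0 there exists a unique α₀ > 0 satisfying x·α₀·(√3 + 5α₀) = √3, and for every α > 0 one has F(x, α) ≥ F(x, α₀). That is, the family of scaling-law curves possesses a lower envelope, obtained for each x > 0 by minimizing F(x, ·) over α > 0, and the minimum is attained at the unique positive root α₀ of x·α·(√3 + 5α) = √3. -/
/-!
Write `F(α) = ((s + cα)/(2α))·exp(αx)` with `s > 0`, `c ≥ 0`, `x > 0` (the paper has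
`s = √3`, `c = 5`). Its derivative is `exp(αx)/(2α²)·(xα(s + cα) - s)`, and
`α ↦ xα(s + cα)` increases strictly from `0` to `∞` on `α ≥ 0`. Hence it crosses the level
`s` exactly once, at `α₀`, and `F` decreases on `(0, α₀]` and increases on `[α₀, ∞)`.
-/

open Real Set

noncomputable def scalingLaw (s c x α : ℝ) : ℝ :=
  ((s + c * α) / (2 * α)) * exp (α * x)

section

variable {s c x : ℝ}

lemma strictMonoOn_stationarity (hx : 0 < x) (hs : 0 < s) (hc : 0 ≤ c) :
    StrictMonoOn (fun a ↦ x * a * (s + c * a)) (Ici 0) := by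
  intro a ha b hb hab
  have key : x * b * (s + c * b) - x * a * (s + c * a) = x * (b - a) * (s + c * (a + b)) := by
    ring
  have : 0 < x * (b - a) * (s + c * (a + b)) := by
    have : 0 ≤ c * (a + b) := mul_nonneg hc (add_nonneg ha hb)
    have := sub_pos.2 hab
    positivity
  linarith

lemma exists_pos_stationarity_eq (hx : 0 < x) (hs : 0 < s) (hc : 0 ≤ c) :
    ∃ a, 0 < a ∧ x * a * (s + c * a) = s := by
  have hcont : ContinuousOn (fun a ↦ x * a * (s + c * a)) (Icc 0 x⁻¹) := by fun_prop
  have hs_mem : s ∈ Icc (x * 0 * (s + c * 0)) (x * x⁻¹ * (s + c * x⁻¹)) := by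
    rw [mul_inv_cancel₀ hx.ne']
    constructor <;> nlinarith [inv_pos.2 hx]
  obtain ⟨a, ⟨ha, -⟩, hga⟩ := intermediate_value_Icc (inv_pos.2 hx).le hcont hs_mem
  refine ⟨a, ha.lt_of_ne ?_, hga⟩
  rintro rfl
  simp only [mul_zero, zero_mul] at hga
  exact hs.ne hga

lemma existsUnique_pos_stationarity_eq (hx : 0 < x) (hs : 0 < s) (hc : 0 ≤ c) :
    ∃! a, 0 < a ∧ x * a * (s + c * a) = s := by
  obtain ⟨a, ha, hga⟩ := exists_pos_stationarity_eq hx hs hc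
  refine ⟨a, ⟨ha, hga⟩, fun b ⟨hb, hgb⟩ ↦ ?_⟩
  exact (strictMonoOn_stationarity hx hs hc).injOn (mem_Ici.2 hb.le) (mem_Ici.2 ha.le)
    (hgb.trans hga.symm)

lemma hasDerivAt_scalingLaw {a : ℝ} (ha : a ≠ 0) :
    HasDerivAt (scalingLaw s c x) (exp (a * x) / (2 * a ^ 2) * (x * a * (s + c * a) - s)) a := by
  have hquot : HasDerivAt (fun a ↦ (s + c * a) / (2 * a)) (-s / (2 * a ^ 2)) a := by
    refine ((((hasDerivAt_id' a).const_mul c).const_add s).div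
      ((hasDerivAt_id' a).const_mul 2) (mul_ne_zero two_ne_zero ha)).congr_deriv ?_
    field_simp
    ring
  have hexp : HasDerivAt (fun a ↦ exp (a * x)) (exp (a * x) * x) a := by
    simpa using ((hasDerivAt_id' a).mul_const x).exp
  refine (hquot.mul hexp).congr_deriv ?_
  field_simp
  ring

lemma isMinOn_scalingLaw (hx : 0 < x) (hs : 0 < s) (hc : 0 ≤ c) {a₀ : ℝ} (ha₀ : 0 < a₀)
    (hstat : x * a₀ * (s + c * a₀) = s) :
    IsMinOn (scalingLaw s c x) (Ioi 0) a₀ := by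
  have hmono := strictMonoOn_stationarity hx hs hc
  have hderiv : ∀ a, 0 < a →
      deriv (scalingLaw s c x) a = exp (a * x) / (2 * a ^ 2) * (x * a * (s + c * a) - s) :=
    fun a ha ↦ (hasDerivAt_scalingLaw ha.ne').deriv
  have hdiff : DifferentiableOn ℝ (scalingLaw s c x) (Ioi 0) :=
    fun a ha ↦ (hasDerivAt_scalingLaw (ne_of_gt ha)).differentiableAt.differentiableWithinAt
  refine isMinOn_Ioi_of_deriv (hasDerivAt_scalingLaw ha₀.ne').continuousAt
    (hdiff.mono Ioo_subset_Ioi_self) (hdiff.mono (Ioi_subset_Ioi ha₀.le)) ?_ ?_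
  · intro a ⟨ha, hlt⟩
    have : x * a * (s + c * a) < s := by
      simpa only [hstat] using hmono (mem_Ici.2 ha.le) (mem_Ici.2 ha₀.le) hlt
    rw [hderiv a ha]
    exact mul_nonpos_of_nonneg_of_nonpos (by positivity) (by linarith)
  · intro a (hlt : a₀ < a)
    have : s < x * a * (s + c * a) := by
      simpa only [hstat] using hmono (mem_Ici.2 ha₀.le) (mem_Ici.2 (ha₀.trans hlt).le) hlt
    rw [hderiv a (ha₀.trans hlt)]
    exact mul_nonneg (by positivity) (by linarith)

end

/-- For each fixed `x > 0` there is a unique `α₀ > 0` with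
`x·α₀·(√3 + 5α₀) = √3`, and `F(x, ·)` attains its minimum over `α > 0` there,
where `F(x, α) = ((√3 + 5α)/(2α))·exp(α·x)`. -/
theorem envelope_is_lower_envelope (x : ℝ) (hx : 0 < x) :
    (∃! α₀ : ℝ, 0 < α₀ ∧ x * α₀ * (Real.sqrt 3 + 5 * α₀) = Real.sqrt 3) ∧
    (∀ α₀ : ℝ, 0 < α₀ → x * α₀ * (Real.sqrt 3 + 5 * α₀) = Real.sqrt 3 →
      ∀ α : ℝ, 0 < α →
        ((Real.sqrt 3 + 5 * α₀) / (2 * α₀)) * Real.exp (α₀ * x) ≤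
          ((Real.sqrt 3 + 5 * α) / (2 * α)) * Real.exp (α * x)) := by
  have hs : 0 < Real.sqrt 3 := by positivity
  refine ⟨existsUnique_pos_stationarity_eq hx hs (by norm_num), fun α₀ hα₀ hstat α hα ↦ ?_⟩
  exact isMinOn_scalingLaw hx hs (by norm_num) hα₀ hstat hα
end

section
/- Define x(α) = √3/(α·(√3 + 5α)) and y(α) = ((√3 + 5α)/(2α))·exp(√3/(√3 + 5α)) for α > 0. Then for every α > 0: (i) y(α) = F(x(α), α) where F(x, α) = ((√3 + 5α)/(2α))·exp(α·x), so the point (x(α), y(α)) lies on the family curve with parameter α; and (ii) the envelope curve α ↦ (x(α), y(α)) is tangent there to that family curve, i.e., y′(α) = (α·y(α))·x′(α), where α·y(α) = ∂F/∂x at (x(α), α). -/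
/-! Along the family `F(x, a) = c(a)·exp(a·x)` the chain rule gives
`d/da F(x(a), a) = ∂F/∂a + ∂F/∂x · x'(a)`, and the contact abscissa `x(a)` is exactly where
`∂F/∂a = (c'(a) + c(a)·x(a))·exp(a·x)` vanishes; with `∂F/∂x = a·F` this is the tangency. -/

open Real Filter

theorem hasDerivAt_mul_exp_mul_of_contact {c x : ℝ → ℝ} {a c' x' : ℝ}
    (hc : HasDerivAt c c' a) (hx : HasDerivAt x x' a) (hcontact : c' + c a * x a = 0) :
    HasDerivAt (fun t => c t * exp (t * x t)) (a * (c a * exp (a * x a)) * x') a := by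
  have hexp : HasDerivAt (fun t => exp (t * x t)) (exp (a * x a) * (1 * x a + a * x')) a :=
    ((hasDerivAt_id' a).mul hx).exp
  refine (hc.mul hexp).congr_deriv ?_
  linear_combination exp (a * x a) * hcontact

section ScalingLaw

variable {s a : ℝ}

theorem hasDerivAt_prefactor (ha : a ≠ 0) :
    HasDerivAt (fun t => (s + 5 * t) / (2 * t)) (-s / (2 * a ^ 2)) a := by
  have hlin : HasDerivAt (fun t => s + 5 * t) 5 a := by
    simpa using ((hasDerivAt_id a).const_mul 5).const_add s
  have hden : HasDerivAt (fun t : ℝ => 2 * t) 2 a := by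
    simpa using (hasDerivAt_id a).const_mul 2
  refine (hlin.div hden (mul_ne_zero two_ne_zero ha)).congr_deriv ?_
  field_simp
  ring

theorem mul_contactAbscissa (hs : 0 ≤ s) (ha : 0 < a) :
    a * (s / (a * (s + 5 * a))) = s / (s + 5 * a) := by
  field_simp

theorem contactAbscissa_isContact (hs : 0 ≤ s) (ha : 0 < a) :
    -s / (2 * a ^ 2) + (s + 5 * a) / (2 * a) * (s / (a * (s + 5 * a))) = 0 := by
  field_simp
  ring

theorem differentiableAt_contactAbscissa (hs : 0 ≤ s) (ha : 0 < a) :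
    DifferentiableAt ℝ (fun t => s / (t * (s + 5 * t))) a :=
  (differentiableAt_const s).div (by fun_prop) (by positivity)

end ScalingLaw

/-- With `x(α) = √3/(α·(√3 + 5α))`, `y(α) = ((√3 + 5α)/(2α))·exp(√3/(√3 + 5α))`
and `F(x, α) = ((√3 + 5α)/(2α))·exp(α·x)`: the envelope point `(x(α), y(α))`
lies on the family curve with parameter `α`, and the envelope is tangent there
to the family curve, i.e. `y′(α) = (α·y(α))·x′(α)`. -/
theorem envelope_on_curve_and_tangent (α : ℝ) (hα : 0 < α) :
    let xfun : ℝ → ℝ := fun a => Real.sqrt 3 / (a * (Real.sqrt 3 + 5 * a))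
    let yfun : ℝ → ℝ := fun a =>
      ((Real.sqrt 3 + 5 * a) / (2 * a)) * Real.exp (Real.sqrt 3 / (Real.sqrt 3 + 5 * a))
    yfun α = ((Real.sqrt 3 + 5 * α) / (2 * α)) * Real.exp (α * xfun α) ∧
    deriv yfun α = (α * yfun α) * deriv xfun α := by
  intro xfun yfun
  have hs : 0 ≤ √3 := sqrt_nonneg 3
  have hcurve : ∀ t, 0 < t → yfun t = (√3 + 5 * t) / (2 * t) * exp (t * xfun t) := by
    intro t ht
    simp only [yfun, xfun, mul_contactAbscissa hs ht]
  have hy : HasDerivAt yfun (α * yfun α * deriv xfun α) α := by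
    rw [hcurve α hα]
    refine (hasDerivAt_mul_exp_mul_of_contact (hasDerivAt_prefactor hα.ne')
      (differentiableAt_contactAbscissa hs hα).hasDerivAt
      (contactAbscissa_isContact hs hα)).congr_of_eventuallyEq ?_
    filter_upwards [Ioi_mem_nhds hα] with t ht using hcurve t ht
  exact ⟨hcurve α hα, hy.deriv⟩
end
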